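/- Let u be Lipschitz continuous on the closed unit ball of ℝⁿ and suppose u minimizes the energy J(·,B₁) among all Lipschitz competitors v with v = u on ∂B₁ (equivalently, with {v ≠ u} contained in B₁). If u ≥ 0 on ∂B₁, then u ≥ 0 everywhere on B₁, and moreover sup_{B₁} u ≤ sup_{∂B₁} u. -/

import Mathlib

open Metric MeasureTheory Set Real

noncomputable section

/-- The energy functional `J(v, O) = ∫_O ( ½|Dv|² + δ(x) (v⁺)^{γ(x)} ) dx`,
where the gradient is the a.e.-defined gradient of a Lipschitz function
(realized via `gradient`, which vanishes at points of non-differentiability). -/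
def energyJ {n : ℕ} (δ γ u : EuclideanSpace ℝ (Fin n) → ℝ)
    (O : Set (EuclideanSpace ℝ (Fin n))) : ℝ :=
  ∫ x in O, ((1:ℝ)/2 * ‖gradient u x‖ ^ 2 + δ x * (max (u x) 0) ^ (γ x))

open Filter intervalIntegral

abbrev En (n : ℕ) := EuclideanSpace ℝ (Fin n)

section AuxLemmas
variable {n : ℕ}

lemma oneD {K : NNReal} {g : ℝ → ℝ} (hg : LipschitzWith K g)
    (h : ∀ᵐ t ∂(volume.restrict (Set.Ioc (0:ℝ) 1)), HasDerivAt g 0 t) : g 1 = g 0 := by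
  have gc : Continuous g := hg.continuous
  set G : ℝ → ℝ := fun x => ∫ s in (0:ℝ)..x, g s with hG
  have hGd : ∀ x : ℝ, HasDerivAt G (g x) x := fun x =>
    integral_hasDerivAt_right (gc.intervalIntegrable _ _)
      (gc.stronglyMeasurableAtFilter _ _) gc.continuousAt
  set hseq : ℕ → ℝ := fun k => 1/(k+1) with hhseq
  have hpos : ∀ k, 0 < hseq k := fun k => by positivity
  have hne : ∀ k, hseq k ≠ 0 := fun k => (hpos k).ne'
  have hlim : Tendsto hseq atTop (nhds 0) := tendsto_one_div_add_atTop_nhds_zero_nat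
  -- key identity
  have key : ∀ k, (∫ t in (0:ℝ)..1, (g (t + hseq k) - g t) / hseq k)
      = (G (1 + hseq k) - G 1) / hseq k - (G (0 + hseq k) - G 0) / hseq k := by
    intro k
    set e := hseq k
    have i1 : IntervalIntegrable (fun t => g (t + e)) volume (0:ℝ) 1 :=
      (gc.comp (continuous_id.add continuous_const)).intervalIntegrable _ _
    have i2 : IntervalIntegrable g volume (0:ℝ) 1 := gc.intervalIntegrable _ _
    have : (∫ t in (0:ℝ)..1, (g (t + e) - g t) / e)
        = ((∫ t in (0:ℝ)..1, g (t + e)) - ∫ t in (0:ℝ)..1, g t) / e := by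
      rw [← integral_sub i1 i2]
      simp_rw [div_eq_inv_mul]
      rw [intervalIntegral.integral_const_mul]
    rw [this, integral_comp_add_right (fun t => g t) e]
    have a1 : (∫ t in (0:ℝ)+e..1+e, g t) = G (1+e) - G (0+e) := by
      have := integral_interval_sub_left (a := (0:ℝ)) (b := 1+e) (c := 0+e) (μ := volume)
        (gc.intervalIntegrable _ _) (gc.intervalIntegrable _ _)
      rw [← this]
    have a2 : G 0 = 0 := integral_same
    have a3 : G 1 = ∫ t in (0:ℝ)..1, g t := rfl
    rw [a1, ← a3, a2]
    ring
  -- limit of RHS : g 1 - g 0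
  have slope1 : Tendsto (fun k => (G (1 + hseq k) - G 1) / hseq k) atTop (nhds (g 1)) := by
    have := (hasDerivAt_iff_tendsto_slope).1 (hGd 1)
    have hseq1 : Tendsto (fun k => 1 + hseq k) atTop (nhdsWithin 1 {(1:ℝ)}ᶜ) := by
      apply tendsto_nhdsWithin_of_tendsto_nhds_of_eventually_within
      · simpa using (tendsto_const_nhds.add hlim)
      · exact Eventually.of_forall fun k => by simp [hne k, (hpos k).ne']
    have := this.comp hseq1
    convert this using 2 with k
    simp [slope, vsub_eq_sub, div_eq_inv_mul]
  have slope0 : Tendsto (fun k => (G (0 + hseq k) - G 0) / hseq k) atTop (nhds (g 0)) := by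
    have := (hasDerivAt_iff_tendsto_slope).1 (hGd 0)
    have hseq1 : Tendsto (fun k => 0 + hseq k) atTop (nhdsWithin 0 {(0:ℝ)}ᶜ) := by
      apply tendsto_nhdsWithin_of_tendsto_nhds_of_eventually_within
      · simpa using hlim
      · exact Eventually.of_forall fun k => by simp [hne k, (hpos k).ne']
    have := this.comp hseq1
    convert this using 2 with k
    simp [slope, vsub_eq_sub, div_eq_inv_mul]
  have lim1 : Tendsto (fun k => ∫ t in (0:ℝ)..1, (g (t + hseq k) - g t) / hseq k)
      atTop (nhds (g 1 - g 0)) := by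
    simp_rw [key]; exact slope1.sub slope0
  -- DCT side
  have lim2 : Tendsto (fun k => ∫ t in (0:ℝ)..1, (g (t + hseq k) - g t) / hseq k)
      atTop (nhds 0) := by
    have : ∀ k, (∫ t in (0:ℝ)..1, (g (t + hseq k) - g t) / hseq k)
        = ∫ t in Set.Ioc (0:ℝ) 1, (g (t + hseq k) - g t) / hseq k := fun k =>
      integral_of_le zero_le_one
    simp_rw [this]
    have main : Tendsto (fun k => ∫ t in Set.Ioc (0:ℝ) 1, (g (t + hseq k) - g t) / hseq k)
        atTop (nhds (∫ t in Set.Ioc (0:ℝ) 1, (0:ℝ))) := by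
      apply tendsto_integral_of_dominated_convergence (fun _ => (K:ℝ))
      · intro k
        exact ((gc.comp (continuous_id.add continuous_const)).sub gc |>.div_const _).aestronglyMeasurable.restrict
      · exact integrable_const _
      · intro k
        refine Eventually.of_forall fun t => ?_
        rw [norm_div, Real.norm_eq_abs, Real.norm_eq_abs, abs_of_pos (hpos k), div_le_iff₀ (hpos k)]
        have := hg.dist_le_mul (t + hseq k) t
        rw [Real.dist_eq, Real.dist_eq] at this
        simpa [abs_of_pos (hpos k)] using this
      · filter_upwards [h] with t ht
        have hts := (hasDerivAt_iff_tendsto_slope).1 ht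
        have hseq1 : Tendsto (fun k => t + hseq k) atTop (nhdsWithin t {t}ᶜ) := by
          apply tendsto_nhdsWithin_of_tendsto_nhds_of_eventually_within
          · simpa using (tendsto_const_nhds.add hlim)
          · exact Eventually.of_forall fun k => by simp [hne k, (hpos k).ne']
        have hts2 := hts.comp hseq1
        convert hts2 using 2 with k
        simp [slope, vsub_eq_sub, div_eq_inv_mul]
    simpa using main
  have := tendsto_nhds_unique lim1 lim2
  linarith

lemma constancy {n : ℕ} {K : NNReal} {f : En n → ℝ} (hf : LipschitzWith K f)
    (hae : ∀ᵐ x ∂(volume.restrict (ball (0 : En n) 1)),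
      DifferentiableAt ℝ f x ∧ fderiv ℝ f x = 0) :
    ∀ z ∈ ball (0 : En n) 1, f z = f 0 := by
  intro z hz
  rw [mem_ball_zero_iff] at hz
  set ε : ℝ := (1 - ‖z‖)/2 with hε
  have hεpos : 0 < ε := by
    have : 0 ≤ ‖z‖ := norm_nonneg z
    simp only [hε]; linarith
  set A : Set (En n) := {x | DifferentiableAt ℝ f x ∧ fderiv ℝ f x = 0} with hA
  have hAm : MeasurableSet A := by
    have h1 : MeasurableSet {x : En n | DifferentiableAt ℝ f x} :=
      measurableSet_of_differentiableAt ℝ f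
    have h2 : MeasurableSet {x : En n | fderiv ℝ f x = 0} :=
      (measurable_fderiv ℝ f) (measurableSet_singleton 0)
    exact h1.inter h2
  set N : Set (En n) := ball (0 : En n) 1 \ A with hNdef
  have hNm : MeasurableSet N := measurableSet_ball.diff hAm
  have hN : volume N = 0 := by
    have h1 : (volume.restrict (ball (0 : En n) 1)) Aᶜ = 0 := ae_iff.1 hae
    rw [Measure.restrict_apply hAm.compl] at h1
    rw [hNdef, diff_eq, inter_comm]
    exact h1
  set μ1 := volume.restrict (ball (0 : En n) ε) with hμ1
  set μ2 := volume.restrict (Set.Icc (0:ℝ) 1) with hμ2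
  set S : Set (En n × ℝ) := {p | p.1 + p.2 • z ∈ N} with hS
  have hSm : MeasurableSet S := by
    have hcont : Continuous (fun p : En n × ℝ => p.1 + p.2 • z) :=
      continuous_fst.add (continuous_snd.smul continuous_const)
    exact hcont.measurable hNm
  have hprod : μ1.prod μ2 S = 0 := by
    rw [Measure.prod_apply_symm hSm]
    have : ∀ t : ℝ, μ1 ((fun w => (w, t)) ⁻¹' S) = 0 := by
      intro t
      have hpre : ((fun w : En n => (w, t)) ⁻¹' S) = (· + t • z) ⁻¹' N := rfl
      have h1 : μ1 ((· + t • z) ⁻¹' N) ≤ volume ((· + t • z) ⁻¹' N) :=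
        Measure.restrict_le_self _
      have h2 : volume ((· + t • z) ⁻¹' N) = volume N :=
        measure_preimage_add_right volume (t • z) N
      rw [hpre]
      exact le_antisymm (by rw [h2, hN] at h1; exact h1) zero_le
    simp only [this, lintegral_zero]
  have hslice : ∀ᵐ w ∂μ1, μ2 (Prod.mk w ⁻¹' S) = 0 :=
    (Measure.measure_prod_null hSm).1 hprod
  have hmem : ∀ᵐ w ∂μ1, w ∈ ball (0 : En n) ε := ae_restrict_mem measurableSet_ball
  have hG : ∀ᵐ w ∂μ1, f (w + z) = f w := by
    filter_upwards [hslice, hmem] with w hw hwm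
    -- 1D lemma with g t = f (w + t • z)
    set g : ℝ → ℝ := fun t => f (w + t • z) with hg
    have hline : LipschitzWith ‖z‖₊ (fun t : ℝ => w + t • z) := by
      apply LipschitzWith.of_dist_le_mul
      intro a b
      simp only [dist_add_left]
      rw [dist_eq_norm, ← sub_smul, norm_smul]
      simp [Real.dist_eq, norm_smul, mul_comm]
    have hgl : LipschitzWith (K * ‖z‖₊) g := hf.comp hline
    have hder : ∀ᵐ t ∂(volume.restrict (Set.Ioc (0:ℝ) 1)), HasDerivAt g 0 t := by
      have hpm : MeasurableSet {t : ℝ | w + t • z ∈ N} := by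
        have hcont2 : Continuous (fun t : ℝ => w + t • z) :=
          continuous_const.add (continuous_id.smul continuous_const)
        exact hcont2.measurable hNm
      have hIoc : volume ({t : ℝ | w + t • z ∈ N} ∩ Set.Ioc 0 1) = 0 := by
        have : μ2 (Prod.mk w ⁻¹' S) = volume ({t : ℝ | w + t • z ∈ N} ∩ Set.Icc 0 1) := by
          have hid : (Prod.mk w ⁻¹' S) = {t : ℝ | w + t • z ∈ N} := rfl
          rw [hμ2, hid, Measure.restrict_apply hpm]
        have hle : volume ({t : ℝ | w + t • z ∈ N} ∩ Set.Ioc 0 1)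
            ≤ volume ({t : ℝ | w + t • z ∈ N} ∩ Set.Icc 0 1) :=
          measure_mono (inter_subset_inter_right _ Ioc_subset_Icc_self)
        rw [this] at hw
        exact le_antisymm (hw ▸ hle) zero_le
      have hmemIoc : ∀ᵐ t ∂(volume.restrict (Set.Ioc (0:ℝ) 1)), t ∈ Set.Ioc (0:ℝ) 1 :=
        ae_restrict_mem measurableSet_Ioc
      have hnotN : ∀ᵐ t ∂(volume.restrict (Set.Ioc (0:ℝ) 1)), w + t • z ∉ N := by
        rw [ae_restrict_iff' measurableSet_Ioc, ae_iff]
        refine measure_mono_null ?_ hIoc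
        intro t ht
        simp only [mem_setOf_eq, Classical.not_imp, not_not] at ht
        exact ⟨ht.2, ht.1⟩
      filter_upwards [hmemIoc, hnotN] with t htI htN
      have hball : w + t • z ∈ ball (0 : En n) 1 := by
        rw [mem_ball_zero_iff]
        calc ‖w + t • z‖ ≤ ‖w‖ + ‖t • z‖ := norm_add_le _ _
          _ ≤ ‖w‖ + ‖z‖ := by
              have h1 : |t| ≤ 1 := abs_le.2 ⟨by linarith [htI.1], htI.2⟩
              have h2 : ‖t • z‖ ≤ ‖z‖ := by
                rw [norm_smul, Real.norm_eq_abs]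
                calc |t| * ‖z‖ ≤ 1 * ‖z‖ :=
                  mul_le_mul_of_nonneg_right h1 (norm_nonneg z)
                  _ = ‖z‖ := one_mul _
              linarith
          _ < ε + ‖z‖ := by gcongr; exact mem_ball_zero_iff.1 hwm
          _ < 1 := by simp only [hε]; linarith
      have hAmem : w + t • z ∈ A := by
        by_contra hcon
        exact htN ⟨hball, hcon⟩
      obtain ⟨hdiff, hzero⟩ := hAmem
      have hF : HasFDerivAt f (0 : En n →L[ℝ] ℝ) (w + t • z) := by
        have := hdiff.hasFDerivAt
        rwa [hzero] at this
      have hL : HasDerivAt (fun s : ℝ => w + s • z) z t := by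
        simpa using ((hasDerivAt_id t).smul_const z).const_add w
      have := hF.comp_hasDerivAt t hL
      rw [ContinuousLinearMap.zero_apply] at this
      exact this
    have := oneD hgl hder
    simpa [hg] using this
  -- extract sequence
  have hseq : ∀ k : ℕ, ∃ w : En n, ‖w‖ < 1/(k+1) ∧ f (w + z) = f w := by
    intro k
    set r : ℝ := min ε (1/(k+1)) with hr
    have hrpos : 0 < r := lt_min hεpos (by positivity)
    have hpos : 0 < μ1 (ball (0 : En n) r) := by
      rw [hμ1, Measure.restrict_apply measurableSet_ball,
        inter_eq_self_of_subset_left (ball_subset_ball (min_le_left _ _))]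
      exact measure_ball_pos volume 0 hrpos
    have : ∃ w ∈ ball (0 : En n) r, f (w + z) = f w := by
      by_contra hcon
      push_neg at hcon
      have hsub : ball (0 : En n) r ⊆ {w | ¬ f (w + z) = f w} := fun w hw => hcon w hw
      have : μ1 (ball (0 : En n) r) ≤ μ1 {w | ¬ f (w + z) = f w} := measure_mono hsub
      rw [ae_iff.1 hG] at this
      exact absurd (le_antisymm this zero_le) hpos.ne'
    obtain ⟨w, hw1, hw2⟩ := this
    exact ⟨w, lt_of_lt_of_le (mem_ball_zero_iff.1 hw1) (min_le_right _ _), hw2⟩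
  choose w hw1 hw2 using hseq
  have hwlim : Tendsto w atTop (nhds (0 : En n)) := by
    rw [tendsto_zero_iff_norm_tendsto_zero]
    apply squeeze_zero (fun k => norm_nonneg _) (fun k => (hw1 k).le)
    exact tendsto_one_div_add_atTop_nhds_zero_nat
  have hc : Continuous f := hf.continuous
  have l1 : Tendsto (fun k => f (w k + z)) atTop (nhds (f z)) := by
    have : Tendsto (fun k => w k + z) atTop (nhds ((0 : En n) + z)) :=
      hwlim.add tendsto_const_nhds
    rw [zero_add] at this
    exact (hc.tendsto z).comp this
  have l2 : Tendsto (fun k => f (w k)) atTop (nhds (f 0)) := (hc.tendsto 0).comp hwlim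
  have : (fun k => f (w k + z)) = fun k => f (w k) := funext hw2
  rw [this] at l1
  exact tendsto_nhds_unique l1 l2

lemma norm_gradient_eq (f : En n → ℝ) (x : En n) : ‖gradient f x‖ = ‖fderiv ℝ f x‖ := by
  rw [gradient]; exact LinearIsometryEquiv.norm_map _ _

-- clamp lemmas
section clamp
variable {E : Type*} [NormedAddCommGroup E] [NormedSpace ℝ E] {f : E → ℝ} {x : E} {c : ℝ}

lemma fderiv_max_of_lt (hf : ContinuousAt f x) (h : f x < c) :
    fderiv ℝ (fun y => max (f y) c) x = 0 := by
  have hev : (fun y => max (f y) c) =ᶠ[nhds x] (fun _ => c) := by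
    filter_upwards [hf.eventually_lt continuousAt_const h] with y hy
    exact max_eq_right hy.le
  rw [hev.fderiv_eq]; exact fderiv_const_apply c

lemma fderiv_max_of_gt (hf : ContinuousAt f x) (h : c < f x) :
    fderiv ℝ (fun y => max (f y) c) x = fderiv ℝ f x := by
  have hev : (fun y => max (f y) c) =ᶠ[nhds x] f := by
    filter_upwards [continuousAt_const.eventually_lt hf h] with y hy
    exact max_eq_left hy.le
  exact hev.fderiv_eq

lemma fderiv_max_of_eq (h : f x = c) : fderiv ℝ (fun y => max (f y) c) x = 0 := by
  have : IsLocalMin (fun y => max (f y) c) x :=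
    Eventually.of_forall fun y => by simp [h, le_max_right]
  exact this.fderiv_eq_zero

lemma fderiv_min_of_gt (hf : ContinuousAt f x) (h : c < f x) :
    fderiv ℝ (fun y => min (f y) c) x = 0 := by
  have hev : (fun y => min (f y) c) =ᶠ[nhds x] (fun _ => c) := by
    filter_upwards [continuousAt_const.eventually_lt hf h] with y hy
    exact min_eq_right hy.le
  rw [hev.fderiv_eq]; exact fderiv_const_apply c

lemma fderiv_min_of_lt (hf : ContinuousAt f x) (h : f x < c) :
    fderiv ℝ (fun y => min (f y) c) x = fderiv ℝ f x := by
  have hev : (fun y => min (f y) c) =ᶠ[nhds x] f := by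
    filter_upwards [hf.eventually_lt continuousAt_const h] with y hy
    exact min_eq_left hy.le
  exact hev.fderiv_eq

lemma fderiv_min_of_eq (h : f x = c) : fderiv ℝ (fun y => min (f y) c) x = 0 := by
  have : IsLocalMax (fun y => min (f y) c) x :=
    Eventually.of_forall fun y => by simp [h, min_le_right]
  exact this.fderiv_eq_zero

lemma abs_max_sub_max_le (a b c : ℝ) : |max a c - max b c| ≤ |a - b| := by
  rw [abs_sub_le_iff]
  constructor
  · have h1 : max a c ≤ max (b + |a - b|) (c + |a - b|) := by
      apply max_le_max _ (le_add_of_nonneg_right (abs_nonneg _))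
      linarith [le_abs_self (a - b)]
    rw [max_add_add_right] at h1
    linarith
  · have h1 : max b c ≤ max (a + |a - b|) (c + |a - b|) := by
      apply max_le_max _ (le_add_of_nonneg_right (abs_nonneg _))
      linarith [neg_abs_le (a - b)]
    rw [max_add_add_right] at h1
    linarith

lemma abs_min_sub_min_le (a b c : ℝ) : |min a c - min b c| ≤ |a - b| := by
  rw [abs_sub_le_iff]
  constructor
  · have h1 : min a c ≤ min (b + |a - b|) (c + |a - b|) := by
      apply min_le_min _ (le_add_of_nonneg_right (abs_nonneg _))
      linarith [le_abs_self (a - b)]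
    rw [min_add_add_right] at h1
    linarith
  · have h1 : min b c ≤ min (a + |a - b|) (c + |a - b|) := by
      apply min_le_min _ (le_add_of_nonneg_right (abs_nonneg _))
      linarith [neg_abs_le (a - b)]
    rw [min_add_add_right] at h1
    linarith

lemma squeeze_hasFDerivAt {g : E → ℝ} (hf : DifferentiableAt ℝ f x)
    (hf0 : fderiv ℝ f x = 0) (h : ∀ y, |g y - g x| ≤ |f y - f x|) :
    DifferentiableAt ℝ g x ∧ fderiv ℝ g x = 0 := by
  have hF : HasFDerivAt f (0 : E →L[ℝ] ℝ) x := hf0 ▸ hf.hasFDerivAt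
  rw [hasFDerivAt_iff_isLittleO_nhds_zero] at hF
  have hG : HasFDerivAt g (0 : E →L[ℝ] ℝ) x := by
    rw [hasFDerivAt_iff_isLittleO_nhds_zero]
    rw [Asymptotics.isLittleO_iff] at hF ⊢
    intro c hc
    filter_upwards [hF hc] with y hy
    simp only [ContinuousLinearMap.zero_apply, sub_zero] at hy ⊢
    calc ‖g (x + y) - g x‖ = |g (x + y) - g x| := rfl
      _ ≤ |f (x + y) - f x| := h (x + y)
      _ ≤ c * ‖y‖ := hy
  exact ⟨hG.differentiableAt, hG.fderiv⟩

end clamp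

lemma measurable_rpow_of_nonneg {α : Type*} [MeasurableSpace α] {b e : α → ℝ}
    (hb : Measurable b) (he : Measurable e) (h0 : ∀ x, 0 ≤ b x) :
    Measurable fun x => b x ^ e x := by
  have heq : (fun x => b x ^ e x) = fun x =>
      if b x = 0 then (if e x = 0 then 1 else 0)
      else Real.exp (Real.log (b x) * e x) := by
    funext x
    by_cases hbx : b x = 0
    · rw [if_pos hbx, hbx]
      by_cases hex : e x = 0
      · rw [if_pos hex, hex, Real.rpow_zero]
      · rw [if_neg hex, Real.zero_rpow hex]
    · rw [if_neg hbx, Real.rpow_def_of_pos (lt_of_le_of_ne (h0 x) (Ne.symm hbx))]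
  rw [heq]
  apply Measurable.ite (hb (measurableSet_singleton 0))
  · exact Measurable.ite (he (measurableSet_singleton 0)) measurable_const measurable_const
  · exact Real.measurable_exp.comp ((Real.measurable_log.comp hb).mul he)

lemma measurable_grad_norm (f : En n → ℝ) : Measurable fun x => ‖gradient f x‖ := by
  apply Measurable.norm
  exact (LinearIsometryEquiv.continuous _).measurable.comp (measurable_fderiv ℝ f)

-- integrability of squared gradient
lemma integrableOn_grad_sq {K : NNReal} {f : En n → ℝ} (hf : LipschitzWith K f) :
    IntegrableOn (fun x => ‖gradient f x‖ ^ 2) (ball (0 : En n) 1) volume := by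
  refine Measure.integrableOn_of_bounded (M := (K:ℝ)^2) measure_ball_lt_top.ne
    (((measurable_grad_norm f).pow_const 2).aestronglyMeasurable) ?_
  · refine Eventually.of_forall fun x => ?_
    rw [Real.norm_eq_abs, abs_of_nonneg (by positivity)]
    have h1 : ‖gradient f x‖ ≤ K := by
      rw [norm_gradient_eq]; exact norm_fderiv_le_of_lipschitz ℝ hf
    exact pow_le_pow_left₀ (norm_nonneg _) h1 2

-- integrability of the delta term
lemma integrableOn_delta_term {Mδ : ℝ} {δ γ : En n → ℝ} {K : NNReal} {f : En n → ℝ}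
    (hδm : Measurable δ) (hγm : Measurable γ) (hδbd : ∀ x, |δ x| ≤ Mδ)
    (hγpos : ∀ x ∈ ball (0 : En n) 1, 0 < γ x)
    (hγ1 : ∀ x ∈ ball (0 : En n) 1, γ x ≤ 1)
    (hf : LipschitzWith K f) :
    IntegrableOn (fun x => δ x * (max (f x) 0) ^ (γ x)) (ball (0 : En n) 1) volume := by
  set C : ℝ := max 1 (|f 0| + K) with hC
  refine Measure.integrableOn_of_bounded (M := Mδ * C) measure_ball_lt_top.ne
    ((hδm.mul (measurable_rpow_of_nonneg ((hf.continuous.measurable).max measurable_const) hγm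
      (fun x => le_max_right _ _))).aestronglyMeasurable) ?_
  · rw [ae_restrict_iff' measurableSet_ball]
    refine Eventually.of_forall fun x hx => ?_
    have hbase0 : (0:ℝ) ≤ max (f x) 0 := le_max_right _ _
    have hbaseC : max (f x) 0 ≤ C := by
      rcases le_or_gt (f x) 0 with h | h
      · simp only [max_eq_right h, hC]; positivity
      · rw [max_eq_left h.le]
        have := hf.dist_le_mul x 0
        rw [Real.dist_eq] at this
        have hx1 : dist x 0 ≤ 1 := by
          rw [dist_zero_right]; exact (mem_ball_zero_iff.1 hx).le
        have : |f x - f 0| ≤ K := by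
          calc |f x - f 0| ≤ K * dist x 0 := this
            _ ≤ K * 1 := by gcongr
            _ = K := mul_one _
        have : f x ≤ |f 0| + K := by
          cases' abs_le.1 this with h1 h2
          cases' abs_le.1 (le_refl |f 0|) with h3 h4
          linarith [le_abs_self (f 0)]
        exact le_trans this (le_max_right _ _)
    have hrpow : (max (f x) 0) ^ (γ x) ≤ C := by
      rcases le_or_gt (max (f x) 0) 1 with h | h
      · calc (max (f x) 0) ^ (γ x) ≤ 1 := Real.rpow_le_one hbase0 h (hγpos x hx).le
          _ ≤ C := le_max_left _ _
      · calc (max (f x) 0) ^ (γ x) ≤ (max (f x) 0) ^ (1:ℝ) :=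
            Real.rpow_le_rpow_of_exponent_le h.le (hγ1 x hx)
          _ = max (f x) 0 := Real.rpow_one _
          _ ≤ C := hbaseC
    have hrpow0 : (0:ℝ) ≤ (max (f x) 0) ^ (γ x) := Real.rpow_nonneg hbase0 _
    rw [Real.norm_eq_abs, abs_mul, abs_of_nonneg hrpow0]
    have hMδ0 : 0 ≤ Mδ := le_trans (abs_nonneg _) (hδbd 0)
    exact mul_le_mul (hδbd x) hrpow hrpow0 hMδ0

lemma grad_sq_le_of_energy {Mδ : ℝ} {δ γ : En n → ℝ} {Kf Kg : NNReal} {f g : En n → ℝ}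
    (hδm : Measurable δ) (hγm : Measurable γ) (hδbd : ∀ x, |δ x| ≤ Mδ)
    (hγpos : ∀ x ∈ ball (0 : En n) 1, 0 < γ x)
    (hγ1 : ∀ x ∈ ball (0 : En n) 1, γ x ≤ 1)
    (hf : LipschitzWith Kf f) (hg : LipschitzWith Kg g)
    (hE : energyJ δ γ f (ball (0 : En n) 1) ≤ energyJ δ γ g (ball (0 : En n) 1))
    (hd : ∀ x ∈ ball (0 : En n) 1,
      δ x * (max (g x) 0) ^ (γ x) ≤ δ x * (max (f x) 0) ^ (γ x)) :
    ∫ x in ball (0 : En n) 1, ‖gradient f x‖ ^ 2 ≤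
      ∫ x in ball (0 : En n) 1, ‖gradient g x‖ ^ 2 := by
  set B := ball (0 : En n) 1
  have If : IntegrableOn (fun x => (1:ℝ)/2 * ‖gradient f x‖ ^ 2) B volume :=
    (integrableOn_grad_sq hf).const_mul _
  have Ig : IntegrableOn (fun x => (1:ℝ)/2 * ‖gradient g x‖ ^ 2) B volume :=
    (integrableOn_grad_sq hg).const_mul _
  have Df : IntegrableOn (fun x => δ x * (max (f x) 0) ^ (γ x)) B volume :=
    integrableOn_delta_term hδm hγm hδbd hγpos hγ1 hf
  have Dg : IntegrableOn (fun x => δ x * (max (g x) 0) ^ (γ x)) B volume :=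
    integrableOn_delta_term hδm hγm hδbd hγpos hγ1 hg
  have hEf : energyJ δ γ f B = (∫ x in B, (1:ℝ)/2 * ‖gradient f x‖ ^ 2)
      + ∫ x in B, δ x * (max (f x) 0) ^ (γ x) := integral_add If Df
  have hEg : energyJ δ γ g B = (∫ x in B, (1:ℝ)/2 * ‖gradient g x‖ ^ 2)
      + ∫ x in B, δ x * (max (g x) 0) ^ (γ x) := integral_add Ig Dg
  have hDle : (∫ x in B, δ x * (max (g x) 0) ^ (γ x))
      ≤ ∫ x in B, δ x * (max (f x) 0) ^ (γ x) :=
    setIntegral_mono_on Dg Df measurableSet_ball hd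
  rw [hEf, hEg] at hE
  have h2f : (∫ x in B, (1:ℝ)/2 * ‖gradient f x‖ ^ 2)
      = 1/2 * ∫ x in B, ‖gradient f x‖ ^ 2 := MeasureTheory.integral_const_mul _ _
  have h2g : (∫ x in B, (1:ℝ)/2 * ‖gradient g x‖ ^ 2)
      = 1/2 * ∫ x in B, ‖gradient g x‖ ^ 2 := MeasureTheory.integral_const_mul _ _
  rw [h2f, h2g] at hE
  linarith

lemma ae_norm_grad_eq {Kf Kg : NNReal} {f g : En n → ℝ}
    (hf : LipschitzWith Kf f) (hg : LipschitzWith Kg g)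
    (hle : ∀ᵐ x ∂(volume.restrict (ball (0 : En n) 1)), ‖gradient g x‖ ≤ ‖gradient f x‖)
    (hI : (∫ x in ball (0 : En n) 1, ‖gradient f x‖ ^ 2) ≤
      ∫ x in ball (0 : En n) 1, ‖gradient g x‖ ^ 2) :
    ∀ᵐ x ∂(volume.restrict (ball (0 : En n) 1)), ‖gradient g x‖ = ‖gradient f x‖ := by
  set B := ball (0 : En n) 1
  set φ : En n → ℝ := fun x => ‖gradient f x‖ ^ 2 - ‖gradient g x‖ ^ 2 with hφ
  have Iφ : Integrable φ (volume.restrict B) :=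
    (integrableOn_grad_sq hf).sub (integrableOn_grad_sq hg)
  have hφ0 : 0 ≤ᵐ[volume.restrict B] φ := by
    filter_upwards [hle] with x hx
    have := pow_le_pow_left₀ (norm_nonneg _) hx 2
    simp only [φ, Pi.zero_apply]
    linarith
  have hint : (∫ x in B, φ x) = (∫ x in B, ‖gradient f x‖ ^ 2)
      - ∫ x in B, ‖gradient g x‖ ^ 2 :=
    integral_sub (integrableOn_grad_sq hf) (integrableOn_grad_sq hg)
  have h1 : (∫ x in B, φ x) ≤ 0 := by rw [hint]; linarith
  have h2 : 0 ≤ ∫ x in B, φ x := integral_nonneg_of_ae hφ0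
  have h3 : (∫ x in B, φ x) = 0 := le_antisymm h1 h2
  have h4 : φ =ᵐ[volume.restrict B] 0 :=
    (integral_eq_zero_iff_of_nonneg_ae hφ0 Iφ).1 h3
  filter_upwards [h4] with x hx
  simp only [φ, Pi.zero_apply] at hx
  have hsq : ‖gradient g x‖ ^ 2 = ‖gradient f x‖ ^ 2 := by linarith
  have hmul : (‖gradient g x‖ - ‖gradient f x‖) * (‖gradient g x‖ + ‖gradient f x‖) = 0 := by
    ring_nf
    nlinarith [hsq]
  rcases mul_eq_zero.1 hmul with h | h
  · linarith
  · have h5 := norm_nonneg (gradient g x)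
    have h6 := norm_nonneg (gradient f x)
    linarith

lemma core {Mδ : ℝ} {δ γ : En n → ℝ} {K Kv Kw : NNReal} {u v w : En n → ℝ}
    (hδm : Measurable δ) (hγm : Measurable γ) (hδbd : ∀ x, |δ x| ≤ Mδ)
    (hγpos : ∀ x ∈ ball (0 : En n) 1, 0 < γ x)
    (hγ1 : ∀ x ∈ ball (0 : En n) 1, γ x ≤ 1)
    (hulip : LipschitzWith K u) (hvlip : LipschitzWith Kv v) (hwlip : LipschitzWith Kw w)
    (hE : energyJ δ γ u (ball (0 : En n) 1) ≤ energyJ δ γ v (ball (0 : En n) 1))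
    (hd : ∀ x ∈ ball (0 : En n) 1,
      δ x * (max (v x) 0) ^ (γ x) ≤ δ x * (max (u x) 0) ^ (γ x))
    (hvgrad : ∀ x, DifferentiableAt ℝ u x → ‖fderiv ℝ v x‖ ≤ ‖fderiv ℝ u x‖)
    (hwkey : ∀ x, DifferentiableAt ℝ u x → ‖fderiv ℝ v x‖ = ‖fderiv ℝ u x‖ →
      DifferentiableAt ℝ w x ∧ fderiv ℝ w x = 0) :
    ∀ z ∈ ball (0 : En n) 1, w z = w 0 := by
  have h1 := grad_sq_le_of_energy hδm hγm hδbd hγpos hγ1 hulip hvlip hE hd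
  have hrad : ∀ᵐ x ∂(volume.restrict (ball (0 : En n) 1)), DifferentiableAt ℝ u x :=
    ae_restrict_of_ae hulip.ae_differentiableAt
  have hle : ∀ᵐ x ∂(volume.restrict (ball (0 : En n) 1)),
      ‖gradient v x‖ ≤ ‖gradient u x‖ := by
    filter_upwards [hrad] with x hx
    rw [norm_gradient_eq, norm_gradient_eq]
    exact hvgrad x hx
  have h2 := ae_norm_grad_eq hulip hvlip hle h1
  have h3 : ∀ᵐ x ∂(volume.restrict (ball (0 : En n) 1)),
      DifferentiableAt ℝ w x ∧ fderiv ℝ w x = 0 := by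
    filter_upwards [h2, hrad] with x hx hdx
    rw [norm_gradient_eq, norm_gradient_eq] at hx
    exact hwkey x hdx hx
  exact constancy hwlip h3

end AuxLemmas

theorem statement0 {n : ℕ} (hn : 2 ≤ n)
    (δ γ : EuclideanSpace ℝ (Fin n) → ℝ)
    (hδm : Measurable δ) (hγm : Measurable γ)
    (hδbd : ∃ M, ∀ x, |δ x| ≤ M) (hγbd : ∃ M, ∀ x, |γ x| ≤ M)
    (hδ0 : ∀ x, 0 ≤ δ x)
    (hγpos : ∀ x ∈ ball (0 : EuclideanSpace ℝ (Fin n)) 1, 0 < γ x)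
    (hγ1 : ∀ x ∈ ball (0 : EuclideanSpace ℝ (Fin n)) 1, γ x ≤ 1)
    (u : EuclideanSpace ℝ (Fin n) → ℝ)
    (hu : ∃ K, LipschitzOnWith K u (closedBall (0 : EuclideanSpace ℝ (Fin n)) 1))
    (hmin : ∀ v : EuclideanSpace ℝ (Fin n) → ℝ,
      (∃ K, LipschitzOnWith K v (closedBall (0 : EuclideanSpace ℝ (Fin n)) 1)) →
      {x | v x ≠ u x} ⊆ ball (0 : EuclideanSpace ℝ (Fin n)) 1 →
      energyJ δ γ u (ball (0 : EuclideanSpace ℝ (Fin n)) 1) ≤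
        energyJ δ γ v (ball (0 : EuclideanSpace ℝ (Fin n)) 1))
    (hbdry : ∀ x ∈ sphere (0 : EuclideanSpace ℝ (Fin n)) 1, 0 ≤ u x) :
    (∀ x ∈ ball (0 : EuclideanSpace ℝ (Fin n)) 1, 0 ≤ u x) ∧
    (∀ x ∈ ball (0 : EuclideanSpace ℝ (Fin n)) 1,
      u x ≤ sSup (u '' sphere (0 : EuclideanSpace ℝ (Fin n)) 1)) := by
  obtain ⟨K, huK⟩ := hu
  obtain ⟨ub, hublip, hubeq⟩ := huK.extend_real
  obtain ⟨Mδ, hδbd⟩ := hδbd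
  have hBeq : EqOn u ub (ball (0 : En n) 1) := hubeq.mono ball_subset_closedBall
  have hcont : Continuous ub := hublip.continuous
  -- energy congruence on the ball
  have energyJ_congr : ∀ f g : En n → ℝ, EqOn f g (ball (0 : En n) 1) →
      energyJ δ γ f (ball (0 : En n) 1) = energyJ δ γ g (ball (0 : En n) 1) := by
    intro f g h
    apply setIntegral_congr_fun measurableSet_ball
    intro x hx
    have h1 : fderiv ℝ f x = fderiv ℝ g x :=
      (Filter.eventuallyEq_of_mem (isOpen_ball.mem_nhds hx) h).fderiv_eq
    have h2 : gradient f x = gradient g x := by rw [gradient, gradient, h1]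
    simp only [h2, h hx]
  -- energy inequality for competitors that are globally Lipschitz and agree with u on sphere
  have hpiece : ∀ (v : En n → ℝ) (Kv : NNReal), LipschitzWith Kv v →
      (∀ x ∈ sphere (0 : En n) 1, u x = v x) →
      energyJ δ γ ub (ball (0 : En n) 1) ≤ energyJ δ γ v (ball (0 : En n) 1) := by
    intro v Kv hvlip hsph
    classical
    set v' : En n → ℝ := fun x => if x ∈ ball (0 : En n) 1 then v x else u x with hv'
    have hEqcB : EqOn v' v (closedBall (0 : En n) 1) := by
      intro x hx
      by_cases hxB : x ∈ ball (0 : En n) 1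
      · simp only [hv', if_pos hxB]
      · have hxs : x ∈ sphere (0 : En n) 1 := by
          rw [mem_sphere_zero_iff_norm]
          rw [mem_closedBall_zero_iff] at hx
          rw [mem_ball_zero_iff] at hxB
          linarith [not_lt.1 hxB]
        simp only [hv', if_neg hxB]
        exact hsph x hxs
    have hlipOn : LipschitzOnWith Kv v' (closedBall (0 : En n) 1) := by
      intro x hx y hy
      have e1 : v' x = v x := hEqcB hx
      have e2 : v' y = v y := hEqcB hy
      rw [e1, e2]
      exact hvlip x y
    have hsub : {x | v' x ≠ u x} ⊆ ball (0 : En n) 1 := by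
      intro x hx
      by_contra hxB
      exact hx (by simp only [hv', if_neg hxB])
    have hEqB : EqOn v' v (ball (0 : En n) 1) :=
      hEqcB.mono ball_subset_closedBall
    calc energyJ δ γ ub (ball (0 : En n) 1)
        = energyJ δ γ u (ball (0 : En n) 1) := (energyJ_congr u ub hBeq).symm
      _ ≤ energyJ δ γ v' (ball (0 : En n) 1) := hmin v' ⟨Kv, hlipOn⟩ hsub
      _ = energyJ δ γ v (ball (0 : En n) 1) := energyJ_congr v' v hEqB
  -- a point on the sphere and approximating sequence
  have hnpos : 0 < n := by omega
  set e : En n := EuclideanSpace.single (⟨0, hnpos⟩ : Fin n) (1 : ℝ) with he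
  have hse : e ∈ sphere (0 : En n) 1 := by
    rw [mem_sphere_zero_iff_norm, he, EuclideanSpace.norm_single]
    exact norm_one
  have hecB : e ∈ closedBall (0 : En n) 1 := sphere_subset_closedBall hse
  set zs : ℕ → En n := fun k => (1 - 1/(k+1 : ℝ)) • e with hzs
  have hzsB : ∀ k, zs k ∈ ball (0 : En n) 1 := by
    intro k
    rw [mem_ball_zero_iff, hzs]
    have h1 : (0:ℝ) < 1/(k+1 : ℝ) := by positivity
    have h2 : 1/(k+1 : ℝ) ≤ 1 := by
      rw [div_le_one (by positivity)]; push_cast; linarith [Nat.cast_nonneg (α := ℝ) k]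
    rw [norm_smul, Real.norm_eq_abs, mem_sphere_zero_iff_norm.1 hse, mul_one,
      abs_of_nonneg (by linarith)]
    linarith
  have hzslim : Tendsto zs atTop (nhds e) := by
    have h1 : Tendsto (fun k : ℕ => 1 - 1/(k+1 : ℝ)) atTop (nhds 1) := by
      have := (tendsto_one_div_add_atTop_nhds_zero_nat : Tendsto (fun k : ℕ => 1 / ((k : ℝ) + 1)) atTop (nhds 0))
      have h2 := (tendsto_const_nhds (x := (1:ℝ)) (f := atTop (α := ℕ))).sub this
      simpa using h2
    have h3 := h1.smul_const e
    rw [hzs]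
    simp only [one_smul] at h3
    simpa [one_div] using h3
  -- limit of a ball-constant continuous function at e
  have hlimval : ∀ (w : En n → ℝ), Continuous w → (∀ z ∈ ball (0 : En n) 1, w z = w 0) →
      w 0 = w e := by
    intro w hw hconst
    have l1 : Tendsto (fun k => w (zs k)) atTop (nhds (w e)) :=
      (hw.tendsto e).comp hzslim
    have l2 : (fun k => w (zs k)) = fun _ => w 0 := funext fun k => hconst _ (hzsB k)
    rw [l2] at l1
    exact tendsto_nhds_unique tendsto_const_nhds l1
  constructor
  · -- Part 1 : u ≥ 0 on the ball
    set v : En n → ℝ := fun x => max (ub x) 0 with hv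
    set w : En n → ℝ := fun x => min (ub x) 0 with hw
    have hvlip : LipschitzWith K v := hublip.max_const 0
    have hwlip : LipschitzWith K w := hublip.min_const 0
    have hsph : ∀ x ∈ sphere (0 : En n) 1, u x = v x := by
      intro x hx
      have h1 : u x = ub x := hubeq (sphere_subset_closedBall hx)
      rw [hv]
      simp only
      rw [← h1, max_eq_left (hbdry x hx)]
    have hE := hpiece v K hvlip hsph
    have hd : ∀ x ∈ ball (0 : En n) 1,
        δ x * (max (v x) 0) ^ (γ x) ≤ δ x * (max (ub x) 0) ^ (γ x) := by
      intro x hx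
      have : max (v x) 0 = max (ub x) 0 := by rw [hv]; simp [max_assoc]
      rw [this]
    have hvgrad : ∀ x, DifferentiableAt ℝ ub x → ‖fderiv ℝ v x‖ ≤ ‖fderiv ℝ ub x‖ := by
      intro x hx
      rcases lt_trichotomy (ub x) 0 with h | h | h
      · rw [hv]; rw [fderiv_max_of_lt hcont.continuousAt h]; simp
      · rw [hv]; rw [fderiv_max_of_eq h]; simp
      · rw [hv]; rw [fderiv_max_of_gt hcont.continuousAt h]
    have hwkey : ∀ x, DifferentiableAt ℝ ub x → ‖fderiv ℝ v x‖ = ‖fderiv ℝ ub x‖ →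
        DifferentiableAt ℝ w x ∧ fderiv ℝ w x = 0 := by
      intro x hx heq
      rcases lt_trichotomy (ub x) 0 with h | h | h
      · have h1 : fderiv ℝ v x = 0 := fderiv_max_of_lt hcont.continuousAt h
        rw [h1] at heq
        have h2 : fderiv ℝ ub x = 0 := by
          rw [← norm_eq_zero]; rw [← heq]; simp
        have hev : w =ᶠ[nhds x] ub := by
          filter_upwards [hcont.continuousAt.eventually_lt continuousAt_const h] with y hy
          rw [hw]; exact min_eq_left hy.le
        refine ⟨hev.differentiableAt_iff.2 hx, ?_⟩
        rw [hev.fderiv_eq, h2]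
      · have h1 : fderiv ℝ v x = 0 := fderiv_max_of_eq h
        rw [h1] at heq
        have h2 : fderiv ℝ ub x = 0 := by rw [← norm_eq_zero, ← heq]; simp
        apply squeeze_hasFDerivAt hx h2
        intro y
        rw [hw]
        simp only
        exact abs_min_sub_min_le _ _ _
      · have hev : w =ᶠ[nhds x] (fun _ => (0:ℝ)) := by
          filter_upwards [continuousAt_const.eventually_lt hcont.continuousAt h] with y hy
          rw [hw]; exact min_eq_right hy.le
        refine ⟨hev.differentiableAt_iff.2 (differentiableAt_const _), ?_⟩
        rw [hev.fderiv_eq, fderiv_const_apply]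
    have hconst : ∀ z ∈ ball (0 : En n) 1, w z = w 0 :=
      core hδm hγm hδbd hγpos hγ1 hublip hvlip hwlip hE hd hvgrad hwkey
    have hwe : w e = 0 := by
      rw [hw]
      simp only
      rw [min_eq_right]
      rw [← hubeq hecB]
      exact hbdry e hse
    intro x hx
    have h1 : w x = w 0 := hconst x hx
    have h2 : w 0 = w e := hlimval w (hcont.min continuous_const) hconst
    have h3 : w x = 0 := by rw [h1, h2, hwe]
    rw [hw] at h3
    simp only at h3
    have h4 : 0 ≤ ub x := min_eq_right_iff.1 h3
    rw [hBeq hx]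
    exact h4
  · -- Part 2 : u ≤ sup on sphere
    set M : ℝ := sSup (u '' sphere (0 : En n) 1) with hMdef
    have himg : u '' sphere (0 : En n) 1 = ub '' sphere (0 : En n) 1 :=
      image_congr fun x hx => hubeq (sphere_subset_closedBall hx)
    have hbdd : BddAbove (u '' sphere (0 : En n) 1) := by
      rw [himg]
      exact ((isCompact_sphere (0 : En n) 1).image hcont).bddAbove
    have hM : ∀ x ∈ sphere (0 : En n) 1, u x ≤ M :=
      fun x hx => le_csSup hbdd ⟨x, hx, rfl⟩
    set v : En n → ℝ := fun x => min (ub x) M with hv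
    set w : En n → ℝ := fun x => max (ub x) M with hw
    have hvlip : LipschitzWith K v := hublip.min_const M
    have hwlip : LipschitzWith K w := hublip.max_const M
    have hsph : ∀ x ∈ sphere (0 : En n) 1, u x = v x := by
      intro x hx
      have h1 : u x = ub x := hubeq (sphere_subset_closedBall hx)
      rw [hv]
      simp only
      rw [← h1, min_eq_left (hM x hx)]
    have hE := hpiece v K hvlip hsph
    have hd : ∀ x ∈ ball (0 : En n) 1,
        δ x * (max (v x) 0) ^ (γ x) ≤ δ x * (max (ub x) 0) ^ (γ x) := by
      intro x hx
      apply mul_le_mul_of_nonneg_left _ (hδ0 x)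
      apply Real.rpow_le_rpow (le_max_right _ _) _ (hγpos x hx).le
      exact max_le_max (min_le_left _ _) le_rfl
    have hvgrad : ∀ x, DifferentiableAt ℝ ub x → ‖fderiv ℝ v x‖ ≤ ‖fderiv ℝ ub x‖ := by
      intro x hx
      rcases lt_trichotomy (ub x) M with h | h | h
      · rw [hv]; rw [fderiv_min_of_lt hcont.continuousAt h]
      · rw [hv]; rw [fderiv_min_of_eq h]; simp
      · rw [hv]; rw [fderiv_min_of_gt hcont.continuousAt h]; simp
    have hwkey : ∀ x, DifferentiableAt ℝ ub x → ‖fderiv ℝ v x‖ = ‖fderiv ℝ ub x‖ →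
        DifferentiableAt ℝ w x ∧ fderiv ℝ w x = 0 := by
      intro x hx heq
      rcases lt_trichotomy (ub x) M with h | h | h
      · have hev : w =ᶠ[nhds x] (fun _ => M) := by
          filter_upwards [hcont.continuousAt.eventually_lt continuousAt_const h] with y hy
          rw [hw]; exact max_eq_right hy.le
        refine ⟨hev.differentiableAt_iff.2 (differentiableAt_const _), ?_⟩
        rw [hev.fderiv_eq, fderiv_const_apply]
      · have h1 : fderiv ℝ v x = 0 := fderiv_min_of_eq h
        rw [h1] at heq
        have h2 : fderiv ℝ ub x = 0 := by rw [← norm_eq_zero, ← heq]; simp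
        apply squeeze_hasFDerivAt hx h2
        intro y
        rw [hw]
        simp only
        exact abs_max_sub_max_le _ _ _
      · have h1 : fderiv ℝ v x = 0 := fderiv_min_of_gt hcont.continuousAt h
        rw [h1] at heq
        have h2 : fderiv ℝ ub x = 0 := by rw [← norm_eq_zero, ← heq]; simp
        have hev : w =ᶠ[nhds x] ub := by
          filter_upwards [continuousAt_const.eventually_lt hcont.continuousAt h] with y hy
          rw [hw]; exact max_eq_left hy.le
        refine ⟨hev.differentiableAt_iff.2 hx, ?_⟩
        rw [hev.fderiv_eq, h2]
    have hconst : ∀ z ∈ ball (0 : En n) 1, w z = w 0 :=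
      core hδm hγm hδbd hγpos hγ1 hublip hvlip hwlip hE hd hvgrad hwkey
    have hwe : w e = M := by
      rw [hw]
      simp only
      rw [max_eq_right]
      rw [← hubeq hecB]
      exact hM e hse
    intro x hx
    have h1 : w x = w 0 := hconst x hx
    have h2 : w 0 = w e := hlimval w (hcont.max continuous_const) hconst
    have h3 : w x = M := by rw [h1, h2, hwe]
    rw [hw] at h3
    simp only at h3
    have h4 : ub x ≤ M := max_eq_right_iff.1 h3
    rw [hBeq hx]
    exact h4

end
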